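/- arXiv:2309.15043 — 5 statements merged into one kernel-verified Lean document; each statement's English description precedes it below -/
import Mathlib

section
/- For any alternating sign triangle T of order n, if T' denotes the reflection of T along its central column, then ρ(T) + ρ(T') = n + 1, where ρ(T) = 1 + (number of 11-columns strictly left of the central column) + (number of 10-columns strictly right of the central column). -/
open Finset

/-- An alternating sign triangle of order `n`: a triangular array with rows `i = 1,…,n`,
row `i` occupying columns `i,…,2n-i` (so the central column is column `n`).
Entries outside this region are `0`. -/
structure AST (n : ℕ) where
  entry : ℕ → ℕ → ℤ
  support : ∀ i j, entry i j ≠ 0 → 1 ≤ i ∧ i ≤ n ∧ i ≤ j ∧ j ≤ 2 * n - i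
  entries : ∀ i j, entry i j = -1 ∨ entry i j = 0 ∨ entry i j = 1
  rowSum : ∀ i, 1 ≤ i → i ≤ n → ∑ j ∈ Icc i (2 * n - i), entry i j = 1
  altRow : ∀ i j₁ j₂, j₁ < j₂ → entry i j₁ ≠ 0 → entry i j₂ ≠ 0 →
      (∀ j, j₁ < j → j < j₂ → entry i j = 0) → entry i j₁ * entry i j₂ = -1
  altCol : ∀ j i₁ i₂, i₁ < i₂ → entry i₁ j ≠ 0 → entry i₂ j ≠ 0 →
      (∀ i, i₁ < i → i < i₂ → entry i j = 0) → entry i₁ j * entry i₂ j = -1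
  topOne : ∀ i j, entry i j ≠ 0 → (∀ i', i' < i → entry i' j = 0) → entry i j = 1

namespace AST

variable {n : ℕ} (T : AST n)

/-- The sum of the entries of column `j`. -/
def colSum (j : ℕ) : ℤ := ∑ i ∈ Icc 1 n, T.entry i j

/-- The bottom entry of column `j` (the entry of column `j` with the largest row index). -/
def bottom (j : ℕ) : ℤ := T.entry (min j (2 * n - j)) j

/-- A `1`-column: a column summing to `1`. -/
def IsOneCol (j : ℕ) : Prop := T.colSum j = 1

/-- An `11`-column: a `1`-column with bottom entry `1`. -/
def IsElevenCol (j : ℕ) : Prop := T.colSum j = 1 ∧ T.bottom j = 1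

/-- A `10`-column: a `1`-column with bottom entry `0`. -/
def IsTenCol (j : ℕ) : Prop := T.colSum j = 1 ∧ T.bottom j = 0

instance : DecidablePred T.IsOneCol := fun j =>
  inferInstanceAs (Decidable (T.colSum j = 1))
instance : DecidablePred T.IsElevenCol := fun j =>
  inferInstanceAs (Decidable (T.colSum j = 1 ∧ T.bottom j = 1))
instance : DecidablePred T.IsTenCol := fun j =>
  inferInstanceAs (Decidable (T.colSum j = 1 ∧ T.bottom j = 0))

/-- The statistic `ρ`: `1` + (number of `11`-columns strictly left of the central column)
+ (number of `10`-columns strictly right of the central column). -/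
def rho : ℕ :=
  1 + ((Icc 1 (n - 1)).filter T.IsElevenCol).card
    + ((Icc (n + 1) (2 * n - 1)).filter T.IsTenCol).card

end AST

/-- The label in `{0,…,2n-3}` of the non-central column with natural index
`j ∈ {1,…,2n-1} \ {n}` of an AST of order `n` (labels go left to right, skipping the
central column). -/
def AST.label (n j : ℕ) : ℕ := if j < n then j - 1 else j - 2

namespace AST

variable {n : ℕ} (T : AST n)

/-- `T` is an `(n,l,r)`-alternating sign pentagon: every non-central `1`-column has its
label between `l` and `r`. -/
def IsASP (l r : ℕ) : Prop :=
  ∀ j, 1 ≤ j → j ≤ 2 * n - 1 → j ≠ n → T.IsOneCol j → l ≤ AST.label n j ∧ AST.label n j ≤ r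

end AST

namespace AST

variable {n : ℕ} (T : AST n)

lemma entry_zero_of_lt_one {i j : ℕ} (hi : i < 1) : T.entry i j = 0 := by
  by_contra h
  exact absurd (T.support i j h).1 (by omega)

/-- The last nonzero entry of column `j` among rows `1..k` is `v`. -/
def LastIs (j k : ℕ) (v : ℤ) : Prop :=
  ∃ m, 1 ≤ m ∧ m ≤ k ∧ T.entry m j = v ∧ ∀ i, m < i → i ≤ k → T.entry i j = 0

lemma partial_dichotomy (j k : ℕ) :
    ((∑ i ∈ Icc 1 k, T.entry i j = 0) ∧
      ((∀ i, i ≤ k → T.entry i j = 0) ∨ T.LastIs j k (-1))) ∨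
    ((∑ i ∈ Icc 1 k, T.entry i j = 1) ∧ T.LastIs j k 1) := by
  induction k with
  | zero =>
    left
    refine ⟨by simp, Or.inl ?_⟩
    intro i hi
    have : i = 0 := by omega
    subst this
    exact T.entry_zero_of_lt_one (by omega)
  | succ k ih =>
    have hsum : ∑ i ∈ Icc 1 (k+1), T.entry i j
        = (∑ i ∈ Icc 1 k, T.entry i j) + T.entry (k+1) j :=
      Finset.sum_Icc_succ_top (by omega) _
    by_cases he : T.entry (k+1) j = 0
    · rcases ih with ⟨hs, hz | ⟨m, hm1, hmk, hmv, hmz⟩⟩ | ⟨hs, m, hm1, hmk, hmv, hmz⟩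
      · left
        refine ⟨by rw [hsum, hs, he]; ring, Or.inl ?_⟩
        intro i hi
        rcases Nat.lt_or_ge i (k+1) with h | h
        · exact hz i (by omega)
        · have : i = k+1 := by omega
          rw [this]; exact he
      · left
        refine ⟨by rw [hsum, hs, he]; ring, Or.inr ⟨m, hm1, by omega, hmv, ?_⟩⟩
        intro i h1 h2
        rcases Nat.lt_or_ge i (k+1) with h | h
        · exact hmz i h1 (by omega)
        · have : i = k+1 := by omega
          rw [this]; exact he
      · right
        refine ⟨by rw [hsum, hs, he]; ring, m, hm1, by omega, hmv, ?_⟩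
        intro i h1 h2
        rcases Nat.lt_or_ge i (k+1) with h | h
        · exact hmz i h1 (by omega)
        · have : i = k+1 := by omega
          rw [this]; exact he
    · rcases ih with ⟨hs, hz | ⟨m, hm1, hmk, hmv, hmz⟩⟩ | ⟨hs, m, hm1, hmk, hmv, hmz⟩
      · have h1 : T.entry (k+1) j = 1 := by
          apply T.topOne _ _ he
          intro i' hi'
          rcases Nat.lt_or_ge i' 1 with h | h
          · exact T.entry_zero_of_lt_one h
          · exact hz i' (by omega)
        right
        refine ⟨by rw [hsum, hs, h1]; norm_num, k+1, by omega, le_refl _, h1, ?_⟩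
        intro i h1' h2'
        exact absurd (Nat.lt_of_lt_of_le h1' h2') (Nat.lt_irrefl _)
      · have halt := T.altCol j m (k+1) (by omega) (by simp [hmv]) he
          (fun i h1 h2 => hmz i h1 (by omega))
        rw [hmv] at halt
        have h1 : T.entry (k+1) j = 1 := by linarith
        right
        refine ⟨by rw [hsum, hs, h1]; norm_num, k+1, by omega, le_refl _, h1, ?_⟩
        intro i h1' h2'
        exact absurd (Nat.lt_of_lt_of_le h1' h2') (Nat.lt_irrefl _)
      · have halt := T.altCol j m (k+1) (by omega) (by simp [hmv]) he
          (fun i h1 h2 => hmz i h1 (by omega))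
        rw [hmv] at halt
        have h1 : T.entry (k+1) j = -1 := by linarith
        left
        refine ⟨by rw [hsum, hs, h1]; ring, Or.inr ⟨k+1, by omega, le_refl _, h1, ?_⟩⟩
        intro i h1' h2'
        exact absurd (Nat.lt_of_lt_of_le h1' h2') (Nat.lt_irrefl _)

lemma colSum_dichotomy (j : ℕ) : T.colSum j = 0 ∨ T.colSum j = 1 := by
  rcases T.partial_dichotomy j n with ⟨hs, _⟩ | ⟨hs, _⟩
  · exact Or.inl hs
  · exact Or.inr hs

lemma oneCol_bottom {j : ℕ} (hj1 : 1 ≤ j) (hj2 : j ≤ 2*n - 1)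
    (h : T.IsOneCol j) : T.bottom j = 0 ∨ T.bottom j = 1 := by
  have hn : 1 ≤ n := by omega
  rcases T.partial_dichotomy j n with ⟨hs, _⟩ | ⟨hs, m, hm1, hmn, hmv, hmz⟩
  · exact absurd h (by simp [IsOneCol, colSum, hs])
  · set M := min j (2*n - j) with hM
    have hM1 : 1 ≤ M := by omega
    have hMn : M ≤ n := by omega
    rcases Nat.lt_trichotomy M m with hc | hc | hc
    · have hsupp := T.support m j (by simp [hmv])
      exact absurd hc (by omega)
    · right
      rw [bottom, ← hM, hc, hmv]
    · left
      rw [bottom, ← hM]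
      exact hmz M hc hMn

lemma center_one (hn : 1 ≤ n) : T.IsOneCol n := by
  have hnn : T.entry n n = 1 := by
    have h := T.rowSum n hn le_rfl
    have h2 : 2 * n - n = n := by omega
    rw [h2] at h
    simpa using h
  rcases T.partial_dichotomy n n with ⟨hs, hz | ⟨m, hm1, hmn, hmv, hmz⟩⟩ | ⟨hs, _⟩
  · exact absurd (hz n le_rfl) (by simp [hnn])
  · rcases Nat.lt_or_ge m n with h | h
    · exact absurd (hmz n h le_rfl) (by simp [hnn])
    · have : m = n := by omega
      rw [this, hnn] at hmv
      norm_num at hmv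
  · exact hs

lemma sum_colSum (hn : 1 ≤ n) : ∑ j ∈ Icc 1 (2*n-1), T.colSum j = n := by
  unfold colSum
  rw [Finset.sum_comm]
  have key : ∀ i ∈ Icc 1 n, ∑ j ∈ Icc 1 (2*n-1), T.entry i j = 1 := by
    intro i hi
    simp only [mem_Icc] at hi
    rw [← T.rowSum i hi.1 hi.2]
    symm
    apply Finset.sum_subset
    · intro j hj
      simp only [mem_Icc] at *
      omega
    · intro j hj hj'
      by_contra h
      have := T.support i j h
      simp only [mem_Icc] at hj hj'
      omega
  rw [Finset.sum_congr rfl key]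
  simp

lemma card_oneCols (hn : 1 ≤ n) :
    ((Icc 1 (2*n-1)).filter T.IsOneCol).card = n := by
  have h := T.sum_colSum hn
  have h1 : ∑ j ∈ Icc 1 (2*n-1), T.colSum j
      = ∑ j ∈ Icc 1 (2*n-1), if T.IsOneCol j then (1:ℤ) else 0 := by
    apply Finset.sum_congr rfl
    intro j _
    by_cases hp : T.IsOneCol j
    · rw [if_pos hp]; exact hp
    · rw [if_neg hp]; exact (T.colSum_dichotomy j).resolve_right hp
  rw [h1, Finset.sum_boole] at h
  exact_mod_cast h

lemma filter_one_split (A : Finset ℕ) (hA : ∀ j ∈ A, 1 ≤ j ∧ j ≤ 2*n-1) :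
    (A.filter T.IsOneCol).card
      = (A.filter T.IsElevenCol).card + (A.filter T.IsTenCol).card := by
  have hdisj : Disjoint (A.filter T.IsElevenCol) (A.filter T.IsTenCol) := by
    rw [Finset.disjoint_left]
    intro j h1 h2
    have e1 := (Finset.mem_filter.mp h1).2.2
    have e2 := (Finset.mem_filter.mp h2).2.2
    rw [e1] at e2
    norm_num at e2
  rw [← Finset.card_union_of_disjoint hdisj]
  congr 1
  ext j
  simp only [mem_filter, mem_union]
  constructor
  · rintro ⟨hjA, hone⟩
    rcases T.oneCol_bottom (hA j hjA).1 (hA j hjA).2 hone with h | h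
    · exact Or.inr ⟨hjA, hone, h⟩
    · exact Or.inl ⟨hjA, hone, h⟩
  · rintro (⟨hjA, hone, _⟩ | ⟨hjA, hone, _⟩) <;> exact ⟨hjA, hone⟩

end AST

section Aux

open Finset

lemma refl_card_lr {n : ℕ} (P P' : ℕ → Prop) [DecidablePred P] [DecidablePred P']
    (h : ∀ j, 1 ≤ j → j ≤ n - 1 → (P' j ↔ P (2 * n - j))) :
    ((Icc 1 (n - 1)).filter P').card = ((Icc (n + 1) (2 * n - 1)).filter P).card := by
  apply Finset.card_bij' (fun j _ => 2 * n - j) (fun j _ => 2 * n - j)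
  · intro a ha
    simp only [mem_filter, mem_Icc] at *
    exact ⟨⟨by omega, by omega⟩, (h a ha.1.1 ha.1.2).mp ha.2⟩
  · intro a ha
    simp only [mem_filter, mem_Icc] at *
    have hj : 2 * n - (2 * n - a) = a := by omega
    refine ⟨⟨by omega, by omega⟩, (h (2 * n - a) (by omega) (by omega)).mpr ?_⟩
    rw [hj]
    exact ha.2
  · intro a ha
    simp only [mem_filter, mem_Icc] at ha
    omega
  · intro a ha
    simp only [mem_filter, mem_Icc] at ha
    omega

lemma refl_card_rl {n : ℕ} (P P' : ℕ → Prop) [DecidablePred P] [DecidablePred P']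
    (h : ∀ j, n + 1 ≤ j → j ≤ 2 * n - 1 → (P' j ↔ P (2 * n - j))) :
    ((Icc (n + 1) (2 * n - 1)).filter P').card = ((Icc 1 (n - 1)).filter P).card := by
  apply Finset.card_bij' (fun j _ => 2 * n - j) (fun j _ => 2 * n - j)
  · intro a ha
    simp only [mem_filter, mem_Icc] at *
    exact ⟨⟨by omega, by omega⟩, (h a ha.1.1 ha.1.2).mp ha.2⟩
  · intro a ha
    simp only [mem_filter, mem_Icc] at *
    have hj : 2 * n - (2 * n - a) = a := by omega
    refine ⟨⟨by omega, by omega⟩, (h (2 * n - a) (by omega) (by omega)).mpr ?_⟩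
    rw [hj]
    exact ha.2
  · intro a ha
    simp only [mem_filter, mem_Icc] at ha
    omega
  · intro a ha
    simp only [mem_filter, mem_Icc] at ha
    omega

lemma card_split {n : ℕ} (hn : 1 ≤ n) (P : ℕ → Prop) [DecidablePred P] :
    ((Icc 1 (2 * n - 1)).filter P).card
      = ((Icc 1 (n - 1)).filter P).card + ((Icc n n).filter P).card
        + ((Icc (n + 1) (2 * n - 1)).filter P).card := by
  have e1 : Icc 1 (2 * n - 1) = (Icc 1 (n - 1) ∪ Icc n n) ∪ Icc (n + 1) (2 * n - 1) := by
    ext j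
    simp only [mem_union, mem_Icc]
    omega
  have d1 : Disjoint ((Icc 1 (n - 1)).filter P) ((Icc n n).filter P) := by
    rw [Finset.disjoint_left]
    intro j hj1 hj2
    simp only [mem_filter, mem_Icc] at hj1 hj2
    have h1 := hj1.1
    have h2 := hj2.1
    omega
  have d2 : Disjoint (((Icc 1 (n - 1)).filter P) ∪ ((Icc n n).filter P))
      ((Icc (n + 1) (2 * n - 1)).filter P) := by
    rw [Finset.disjoint_left]
    intro j hj1 hj2
    simp only [mem_union, mem_filter, mem_Icc] at hj1 hj2
    have h2 := hj2.1
    rcases hj1 with h1 | h1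
    · have := h1.1; omega
    · have := h1.1; omega
  rw [e1, Finset.filter_union, Finset.filter_union,
      Finset.card_union_of_disjoint d2, Finset.card_union_of_disjoint d1]

end Aux

/-- For any alternating sign triangle `T` of order `n ≥ 1`, if `T'` is the
reflection of `T` along its central column (column `j` is sent to column `2n - j`), then
`ρ(T) + ρ(T') = n + 1`. -/
theorem rho_add_rho_reflection (n : ℕ) (hn : 1 ≤ n) (T T' : AST n)
    (hrefl : ∀ i j, T'.entry i j = T.entry i (2 * n - j)) :
    T.rho + T'.rho = n + 1 := by
  have hcol : ∀ j, T'.colSum j = T.colSum (2 * n - j) := by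
    intro j
    unfold AST.colSum
    exact Finset.sum_congr rfl (fun i _ => hrefl i j)
  have hbot : ∀ j, 1 ≤ j → j ≤ 2 * n - 1 → T'.bottom j = T.bottom (2 * n - j) := by
    intro j h1 h2
    unfold AST.bottom
    rw [hrefl]
    rw [show min (2 * n - j) (2 * n - (2 * n - j)) = min j (2 * n - j) by omega]
  have hE : ∀ j, 1 ≤ j → j ≤ 2 * n - 1 →
      (T'.IsElevenCol j ↔ T.IsElevenCol (2 * n - j)) := by
    intro j h1 h2
    unfold AST.IsElevenCol
    rw [hcol j, hbot j h1 h2]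
  have hT : ∀ j, 1 ≤ j → j ≤ 2 * n - 1 →
      (T'.IsTenCol j ↔ T.IsTenCol (2 * n - j)) := by
    intro j h1 h2
    unfold AST.IsTenCol
    rw [hcol j, hbot j h1 h2]
  have e1 : ((Icc 1 (n - 1)).filter T'.IsElevenCol).card
      = ((Icc (n + 1) (2 * n - 1)).filter T.IsElevenCol).card :=
    refl_card_lr _ _ (fun j h1 h2 => hE j h1 (by omega))
  have e2 : ((Icc (n + 1) (2 * n - 1)).filter T'.IsTenCol).card
      = ((Icc 1 (n - 1)).filter T.IsTenCol).card :=
    refl_card_rl _ _ (fun j h1 h2 => hT j (by omega) h2)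
  have hone : ((Icc 1 (2 * n - 1)).filter T.IsOneCol).card = n := T.card_oneCols hn
  have hsplit := card_split hn T.IsOneCol
  have hcenter : ((Icc n n).filter T.IsOneCol).card = 1 := by
    rw [Finset.Icc_self, Finset.filter_singleton, if_pos (T.center_one hn)]
    simp
  have hL := T.filter_one_split (Icc 1 (n - 1))
    (fun j hj => by simp only [mem_Icc] at hj; omega)
  have hR := T.filter_one_split (Icc (n + 1) (2 * n - 1))
    (fun j hj => by simp only [mem_Icc] at hj; omega)
  unfold AST.rho
  omega
end

section
/- Every alternating sign triangle of order n has exactly n columns whose entries sum to 1 (1-columns), and its central column is always a 1-column. -/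
open Finset

/-- Key auxiliary lemma: for an alternating sequence with values in `{-1,0,1}` whose
first nonzero entry is `1`, the partial sums are `0` or `1`, and equal `1` iff the
last nonzero entry so far is `1`. -/
lemma alt_aux (f : ℕ → ℤ) (h0 : f 0 = 0)
    (hvals : ∀ i, f i = -1 ∨ f i = 0 ∨ f i = 1)
    (halt : ∀ i₁ i₂, i₁ < i₂ → f i₁ ≠ 0 → f i₂ ≠ 0 →
      (∀ i, i₁ < i → i < i₂ → f i = 0) → f i₁ * f i₂ = -1)
    (htop : ∀ i, f i ≠ 0 → (∀ i', i' < i → f i' = 0) → f i = 1) :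
    ∀ m, (∑ i ∈ Icc 1 m, f i = 0 ∨ ∑ i ∈ Icc 1 m, f i = 1) ∧
      (∑ i ∈ Icc 1 m, f i = 1 ↔
        ∃ i, 1 ≤ i ∧ i ≤ m ∧ f i = 1 ∧ ∀ i', i < i' → i' ≤ m → f i' = 0) := by
  intro m
  induction m with
  | zero =>
    have he : (Icc 1 0 : Finset ℕ) = ∅ := by simp
    rw [he, Finset.sum_empty]
    refine ⟨Or.inl rfl, ?_, ?_⟩
    · intro h; norm_num at h
    · rintro ⟨i, hi1, hi0, -, -⟩; omega
  | succ m ih =>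
    have hsum : ∑ i ∈ Icc 1 (m + 1), f i = (∑ i ∈ Icc 1 m, f i) + f (m + 1) := by
      exact Finset.sum_Icc_succ_top (by omega) f
    rcases hvals (m + 1) with hv | hv | hv
    · -- f (m+1) = -1 : previous sum must be 1
      have hprev : ∑ i ∈ Icc 1 m, f i = 1 := by
        rcases ih.1 with h0' | h1'
        · exfalso
          rcases ((Icc 1 m).filter (fun i => f i ≠ 0)).eq_empty_or_nonempty with hemp | hne
          · -- no nonzero entry before m+1 : topOne forces f (m+1) = 1
            have hz : ∀ i' < m + 1, f i' = 0 := by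
              intro i' hi'
              rcases Nat.eq_zero_or_pos i' with h | h
              · rw [h]; exact h0
              · by_contra hne'
                have hmem : i' ∈ (Icc 1 m).filter (fun i => f i ≠ 0) := by
                  rw [Finset.mem_filter, Finset.mem_Icc]
                  exact ⟨⟨h, by omega⟩, hne'⟩
                rw [hemp] at hmem
                exact absurd hmem (Finset.notMem_empty i')
            have := htop (m + 1) (by omega) hz
            omega
          · set k := ((Icc 1 m).filter (fun i => f i ≠ 0)).max' hne with hk
            have hkmem := ((Icc 1 m).filter (fun i => f i ≠ 0)).max'_mem hne
            rw [Finset.mem_filter, Finset.mem_Icc] at hkmem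
            have hkmax : ∀ i', k < i' → i' ≤ m → f i' = 0 := by
              intro i' h1 h2
              by_contra hne'
              have : i' ≤ k := Finset.le_max' _ i' (by
                rw [Finset.mem_filter, Finset.mem_Icc]; exact ⟨⟨by omega, h2⟩, hne'⟩)
              omega
            -- f k ≠ 1 since the sum is 0
            have hk1 : f k ≠ 1 := by
              intro h1
              have : ∑ i ∈ Icc 1 m, f i = 1 :=
                ih.2.mpr ⟨k, hkmem.1.1, hkmem.1.2, h1, hkmax⟩
              omega
            have hkm1 : f k = -1 := by
              rcases hvals k with h | h | h
              · exact h
              · exact absurd h hkmem.2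
              · exact absurd h hk1
            have := halt k (m + 1) (by omega) hkmem.2 (by omega)
              (fun i hi1 hi2 => hkmax i hi1 (by omega))
            rw [hkm1, hv] at this
            norm_num at this
        · exact h1'
      have hnew : ∑ i ∈ Icc 1 (m + 1), f i = 0 := by rw [hsum, hprev, hv]; ring
      refine ⟨Or.inl hnew, ?_⟩
      constructor
      · intro h; omega
      · rintro ⟨i, hi1, hi2, hfi, htail⟩
        rcases Nat.lt_or_ge i (m + 1) with h | h
        · have := htail (m + 1) (by omega) le_rfl; omega
        · have : i = m + 1 := by omega
          rw [this] at hfi; omega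
    · -- f (m+1) = 0
      have hnew : ∑ i ∈ Icc 1 (m + 1), f i = ∑ i ∈ Icc 1 m, f i := by
        rw [hsum, hv]; ring
      refine ⟨by rw [hnew]; exact ih.1, ?_⟩
      rw [hnew, ih.2]
      constructor
      · rintro ⟨i, hi1, hi2, hfi, htail⟩
        refine ⟨i, hi1, by omega, hfi, fun i' h1 h2 => ?_⟩
        rcases Nat.lt_or_ge i' (m + 1) with h | h
        · exact htail i' h1 (by omega)
        · have : i' = m + 1 := by omega
          rw [this]; exact hv
      · rintro ⟨i, hi1, hi2, hfi, htail⟩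
        have him : i ≤ m := by
          rcases Nat.lt_or_ge i (m + 1) with h | h
          · omega
          · exfalso; have : i = m + 1 := by omega
            rw [this] at hfi; rw [hv] at hfi; omega
        exact ⟨i, hi1, him, hfi, fun i' h1 h2 => htail i' h1 (by omega)⟩
    · -- f (m+1) = 1 : previous sum must be 0
      have hprev : ∑ i ∈ Icc 1 m, f i = 0 := by
        rcases ih.1 with h0' | h1'
        · exact h0'
        · exfalso
          obtain ⟨i, hi1, hi2, hfi, htail⟩ := ih.2.mp h1'
          have := halt i (m + 1) (by omega) (by rw [hfi]; norm_num) (by omega)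
            (fun i' h1 h2 => htail i' h1 (by omega))
          rw [hfi, hv] at this
          norm_num at this
      have hnew : ∑ i ∈ Icc 1 (m + 1), f i = 1 := by rw [hsum, hprev, hv]; ring
      refine ⟨Or.inr hnew, ?_⟩
      constructor
      · intro _
        exact ⟨m + 1, by omega, le_rfl, hv, fun i' h1 h2 => by omega⟩
      · intro _; exact hnew

/-- Every alternating sign triangle of order `n ≥ 1` has exactly `n`
`1`-columns, and its central column (column `n`) is always a `1`-column. -/
theorem card_oneCols_eq_and_central (n : ℕ) (hn : 1 ≤ n) (T : AST n) :
    ((Finset.Icc 1 (2 * n - 1)).filter T.IsOneCol).card = n ∧ T.IsOneCol n := by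
  -- column-wise facts via alt_aux
  have key : ∀ j, ((T.colSum j = 0 ∨ T.colSum j = 1) ∧
      (T.colSum j = 1 ↔ ∃ i, 1 ≤ i ∧ i ≤ n ∧ T.entry i j = 1 ∧
        ∀ i', i < i' → i' ≤ n → T.entry i' j = 0)) := by
    intro j
    have h0 : T.entry 0 j = 0 := by
      by_contra h
      have := T.support 0 j h
      omega
    exact alt_aux (fun i => T.entry i j) h0 (fun i => T.entries i j)
      (fun i₁ i₂ h h1 h2 h3 => T.altCol j i₁ i₂ h h1 h2 h3)
      (fun i h1 h2 => T.topOne i j h1 h2) n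
  -- the bottom entry of the central column is 1
  have hnn : T.entry n n = 1 := by
    have := T.rowSum n hn le_rfl
    have h2 : 2 * n - n = n := by omega
    rw [h2, Finset.Icc_self, Finset.sum_singleton] at this
    exact this
  have hcentral : T.IsOneCol n := by
    show T.colSum n = 1
    exact (key n).2.mpr ⟨n, hn, le_rfl, hnn, fun i' h1 h2 => by omega⟩
  refine ⟨?_, hcentral⟩
  -- each row sums to 1 even over the full column range
  have rowtotal : ∀ i ∈ Icc 1 n, ∑ j ∈ Icc 1 (2 * n - 1), T.entry i j = 1 := by
    intro i hi
    rw [Finset.mem_Icc] at hi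
    rw [← T.rowSum i hi.1 hi.2]
    refine (Finset.sum_subset ?_ ?_).symm
    · intro j hj
      rw [Finset.mem_Icc] at *
      omega
    · intro j hj hnj
      rw [Finset.mem_Icc] at hj
      rw [Finset.mem_Icc] at hnj
      by_contra h
      have := T.support i j h
      omega
  have total : ∑ j ∈ Icc 1 (2 * n - 1), T.colSum j = (n : ℤ) := by
    unfold AST.colSum
    rw [Finset.sum_comm, Finset.sum_congr rfl rowtotal]
    simp
  -- the total column sum equals the number of 1-columns
  have hcard : ∑ j ∈ Icc 1 (2 * n - 1), T.colSum j =
      (((Finset.Icc 1 (2 * n - 1)).filter T.IsOneCol).card : ℤ) := by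
    rw [← Finset.sum_filter_add_sum_filter_not (Icc 1 (2 * n - 1)) T.IsOneCol]
    have h1 : ∑ j ∈ (Icc 1 (2 * n - 1)).filter T.IsOneCol, T.colSum j =
        (((Finset.Icc 1 (2 * n - 1)).filter T.IsOneCol).card : ℤ) := by
      calc ∑ j ∈ (Icc 1 (2 * n - 1)).filter T.IsOneCol, T.colSum j
          = ∑ _j ∈ (Icc 1 (2 * n - 1)).filter T.IsOneCol, (1 : ℤ) :=
            Finset.sum_congr rfl fun j hj => (Finset.mem_filter.mp hj).2
        _ = _ := by simp
    have h2 : ∑ j ∈ (Icc 1 (2 * n - 1)).filter (fun j => ¬ T.IsOneCol j),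
        T.colSum j = 0 := by
      refine Finset.sum_eq_zero fun j hj => ?_
      have hj' := (Finset.mem_filter.mp hj).2
      rcases (key j).1 with h | h
      · exact h
      · exact absurd h hj'
    rw [h1, h2, add_zero]
  rw [hcard] at total
  exact_mod_cast total
end

section
/- Let n ∈ ℕ and 0 ≤ l ≤ n-2 < r ≤ 2n-3 with l + r < 2n - 3. If r - l ≤ n - 3, then there exist no (n,l,r)-alternating sign pentagons. -/
open Finset

/-- Key invariant: partial column sums are `0` or `1`, with a witness for the last
nonzero entry. -/
lemma AST.partialColSum {n : ℕ} (T : AST n) (j k : ℕ) :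
    ((∑ i ∈ Icc 1 k, T.entry i j) = 1 ∧
      ∃ i, 1 ≤ i ∧ i ≤ k ∧ T.entry i j = 1 ∧ ∀ i', i < i' → i' ≤ k → T.entry i' j = 0)
    ∨ ((∑ i ∈ Icc 1 k, T.entry i j) = 0 ∧
      ((∀ i, i ≤ k → T.entry i j = 0) ∨
        ∃ i, 1 ≤ i ∧ i ≤ k ∧ T.entry i j = -1 ∧
          ∀ i', i < i' → i' ≤ k → T.entry i' j = 0)) := by
  induction k with
  | zero =>
    right
    constructor
    · simp
    · left
      intro i hi
      interval_cases i
      by_contra h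
      exact absurd (T.support 0 j h).1 (by omega)
  | succ k ih =>
    have hsum : ∑ i ∈ Icc 1 (k + 1), T.entry i j
        = (∑ i ∈ Icc 1 k, T.entry i j) + T.entry (k + 1) j :=
      Finset.sum_Icc_succ_top (by omega) _
    rcases T.entries (k + 1) j with he | he | he
    · -- entry (k+1) j = -1
      rcases ih with ⟨hs, i, hi1, hik, hei, hz⟩ | ⟨hs, hcase⟩
      · right
        refine ⟨by rw [hsum, hs, he]; ring, Or.inr ⟨k + 1, by omega, le_refl _, he, ?_⟩⟩
        intro i' h1 h2
        omega
      · exfalso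
        rcases hcase with hall | ⟨i, hi1, hik, hei, hz⟩
        · have := T.topOne (k + 1) j (by rw [he]; norm_num)
            (fun i' hi' => hall i' (by omega))
          rw [he] at this; norm_num at this
        · have := T.altCol j i (k + 1) (by omega) (by rw [hei]; norm_num)
            (by rw [he]; norm_num) (fun i' h1 h2 => hz i' h1 (by omega))
          rw [hei, he] at this; norm_num at this
    · -- entry (k+1) j = 0
      rcases ih with ⟨hs, i, hi1, hik, hei, hz⟩ | ⟨hs, hcase⟩
      · left
        refine ⟨by rw [hsum, hs, he]; ring, i, hi1, by omega, hei, ?_⟩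
        intro i' h1 h2
        rcases Nat.lt_or_ge i' (k + 1) with h | h
        · exact hz i' h1 (by omega)
        · have : i' = k + 1 := by omega
          rw [this, he]
      · right
        refine ⟨by rw [hsum, hs, he]; ring, ?_⟩
        rcases hcase with hall | ⟨i, hi1, hik, hei, hz⟩
        · left
          intro i' hi'
          rcases Nat.lt_or_ge i' (k + 1) with h | h
          · exact hall i' (by omega)
          · have : i' = k + 1 := by omega
            rw [this, he]
        · right
          refine ⟨i, hi1, by omega, hei, ?_⟩
          intro i' h1 h2
          rcases Nat.lt_or_ge i' (k + 1) with h | h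
          · exact hz i' h1 (by omega)
          · have : i' = k + 1 := by omega
            rw [this, he]
    · -- entry (k+1) j = 1
      rcases ih with ⟨hs, i, hi1, hik, hei, hz⟩ | ⟨hs, hcase⟩
      · exfalso
        have := T.altCol j i (k + 1) (by omega) (by rw [hei]; norm_num)
          (by rw [he]; norm_num) (fun i' h1 h2 => hz i' h1 (by omega))
        rw [hei, he] at this; norm_num at this
      · left
        refine ⟨by rw [hsum, hs, he]; ring, k + 1, by omega, le_refl _, he, ?_⟩
        intro i' h1 h2
        omega

lemma AST.colSum_zero_or_one {n : ℕ} (T : AST n) (j : ℕ) :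
    T.colSum j = 0 ∨ T.colSum j = 1 := by
  rcases T.partialColSum j n with ⟨h, _⟩ | ⟨h, _⟩
  · exact Or.inr h
  · exact Or.inl h

lemma AST.sum_colSum_s2 {n : ℕ} (T : AST n) :
    ∑ j ∈ Icc 1 (2 * n - 1), T.colSum j = n := by
  unfold AST.colSum
  rw [Finset.sum_comm]
  have key : ∀ i ∈ Icc 1 n, ∑ j ∈ Icc 1 (2 * n - 1), T.entry i j = 1 := by
    intro i hi
    rw [mem_Icc] at hi
    rw [← T.rowSum i hi.1 hi.2]
    refine (Finset.sum_subset ?_ ?_).symm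
    · intro j hj
      rw [mem_Icc] at hj ⊢
      omega
    · intro j hj hj'
      rw [mem_Icc] at hj hj'
      by_contra h
      have := T.support i j h
      omega
  rw [Finset.sum_congr rfl key]
  simp

lemma AST.card_oneCols_s2 {n : ℕ} (T : AST n) :
    ((Icc 1 (2 * n - 1)).filter T.IsOneCol).card = n := by
  have h1 : ∑ j ∈ Icc 1 (2 * n - 1), T.colSum j
      = (((Icc 1 (2 * n - 1)).filter T.IsOneCol).card : ℤ) := by
    rw [← Finset.sum_filter_add_sum_filter_not (Icc 1 (2 * n - 1)) T.IsOneCol]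
    have ha : ∑ j ∈ (Icc 1 (2 * n - 1)).filter T.IsOneCol, T.colSum j
        = (((Icc 1 (2 * n - 1)).filter T.IsOneCol).card : ℤ) := by
      have h := Finset.sum_eq_card_nsmul (s := (Icc 1 (2 * n - 1)).filter T.IsOneCol)
        (f := T.colSum) (b := (1 : ℤ)) (fun j hj => (Finset.mem_filter.mp hj).2)
      simpa using h
    have hb : ∑ j ∈ (Icc 1 (2 * n - 1)).filter (fun j => ¬ T.IsOneCol j), T.colSum j = 0 := by
      refine Finset.sum_eq_zero ?_
      intro j hj
      rcases T.colSum_zero_or_one j with h | h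
      · exact h
      · exact absurd h (Finset.mem_filter.mp hj).2
    rw [ha, hb, add_zero]
  have h2 := T.sum_colSum_s2
  rw [h1] at h2
  exact_mod_cast h2

/-- Let `0 ≤ l ≤ n - 2 < r ≤ 2n - 3` with `l + r < 2n - 3`.
If `r - l ≤ n - 3`, then there exist no `(n,l,r)`-alternating sign pentagons.
(The inequalities are written additively to avoid truncated subtraction.) -/
theorem no_ASP_of_narrow (n l r : ℕ) (hl : l + 2 ≤ n) (hr1 : n < r + 2)
    (hr2 : r + 3 ≤ 2 * n) (hlr : l + r + 3 < 2 * n) (hnarrow : r + 3 ≤ n + l) :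
    ¬ ∃ T : AST n, T.IsASP l r := by
  rintro ⟨T, hT⟩
  set F := (Icc 1 (2 * n - 1)).filter T.IsOneCol with hF
  have hcard : F.card = n := T.card_oneCols_s2
  set F' := F.erase n with hF'
  have hcard' : n - 1 ≤ F'.card := by
    rw [hF', ← hcard]
    exact Finset.pred_card_le_card_erase
  have hmaps : ∀ j ∈ F', AST.label n j ∈ Icc l r := by
    intro j hj
    rw [hF'] at hj
    have hjn : j ≠ n := Finset.ne_of_mem_erase hj
    have hjF := Finset.mem_of_mem_erase hj
    rw [hF, Finset.mem_filter, mem_Icc] at hjF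
    have := hT j hjF.1.1 hjF.1.2 hjn hjF.2
    rw [mem_Icc]
    exact this
  have hinj : Set.InjOn (AST.label n) F' := by
    intro j₁ h₁ j₂ h₂ heq
    have hj₁ : j₁ ∈ Icc 1 (2 * n - 1) ∧ j₁ ≠ n := by
      rw [hF'] at h₁
      exact ⟨(Finset.mem_filter.mp (Finset.mem_of_mem_erase h₁)).1, Finset.ne_of_mem_erase h₁⟩
    have hj₂ : j₂ ∈ Icc 1 (2 * n - 1) ∧ j₂ ≠ n := by
      rw [hF'] at h₂
      exact ⟨(Finset.mem_filter.mp (Finset.mem_of_mem_erase h₂)).1, Finset.ne_of_mem_erase h₂⟩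
    rw [mem_Icc] at hj₁ hj₂
    unfold AST.label at heq
    split_ifs at heq <;> omega
  have hle : F'.card ≤ (Icc l r).card :=
    Finset.card_le_card_of_injOn _ hmaps hinj
  rw [Nat.card_Icc] at hle
  omega
end

section
/- For n ≥ 1, the antisymmetrization identity ASym_{X_1,...,X_n}[ ∏_{i=1}^n X_i^{i-1} (1 - ∏_{j=i}^n X_j)^{-1} ] = ∏_{i=1}^n (1 - X_i)^{-1} · ∏_{1≤i<j≤n} (X_j - X_i)/(1 - X_i X_j) holds as an identity of rational functions. -/
/-!
Write `E = x₁ ⋯ xₙ`. Sorting the permutations by `p = σ 1`, the factor with `i = 1` is always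
`(1 - E)⁻¹`, and the other factors form the same expression in the `n - 1` variables other than
`x_p`, multiplied by their product. By induction on `n`, after dividing by the right-hand side the
identity reduces to `∑ₖ (1 - xₖ) ∏_{j ≠ k} xⱼ (1 - xⱼ xₖ) / (xⱼ - xₖ) = 1 - E`.
This is the residue theorem for `∏ⱼ (1 - xⱼ y) / (y (1 + y) ∏ⱼ (xⱼ - y))`, whose residues are
`1/E` at `0`, `-1` at `-1` and `-1/E` times the `k`-th summand at `xₖ`; algebraically, a polynomial
of degree `n` has vanishing `(n + 1)`-st divided difference on the `n + 2` nodes `0, -1, x₁, …, xₙ`.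
In the fraction field of `ℚ[X₁, …, Xₙ]` all denominators are nonzero, having constant coefficient 1.
-/

open Finset Polynomial

namespace Littlewood

variable {m : ℕ}

def permCons (p : Fin (m + 1)) (e : Equiv.Perm (Fin m)) : Equiv.Perm (Fin (m + 1)) :=
  p.cycleRange.symm * Equiv.Perm.decomposeFin.symm (0, e)

@[simp]
lemma permCons_zero (p : Fin (m + 1)) (e : Equiv.Perm (Fin m)) : permCons p e 0 = p := by
  simp [permCons, Fin.cycleRange_symm_zero]

@[simp]
lemma permCons_succ (p : Fin (m + 1)) (e : Equiv.Perm (Fin m)) (i : Fin m) :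
    permCons p e i.succ = p.succAbove (e i) := by
  simp [permCons, Fin.cycleRange_symm_succ]

lemma sign_permCons (p : Fin (m + 1)) (e : Equiv.Perm (Fin m)) :
    Equiv.Perm.sign (permCons p e) = (-1) ^ (p : ℕ) * Equiv.Perm.sign e := by
  simp [permCons, Fin.sign_cycleRange]

lemma bijective_permCons :
    Function.Bijective fun pe : Fin (m + 1) × Equiv.Perm (Fin m) => permCons pe.1 pe.2 := by
  refine (Fintype.bijective_iff_injective_and_card _).2 ⟨?_, ?_⟩
  · rintro ⟨p, e⟩ ⟨p', e'⟩ h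
    obtain rfl : p = p' := by simpa using congr($h 0)
    obtain rfl : e = e' := Equiv.ext fun i => by simpa using congr($h i.succ)
    rfl
  · simp [Fintype.card_perm, Nat.factorial_succ]

lemma sum_perm_fin_succ {M : Type*} [AddCommMonoid M] (G : Equiv.Perm (Fin (m + 1)) → M) :
    ∑ σ, G σ = ∑ p, ∑ e, G (permCons p e) := by
  rw [← Fintype.sum_prod_type']
  exact (Fintype.sum_bijective _ bijective_permCons _ _ fun _ => rfl).symm

lemma prod_erase_eq_prod_succAbove {M : Type*} [CommMonoid M] (p : Fin (m + 1))
    (f : Fin (m + 1) → M) : ∏ j ∈ univ.erase p, f j = ∏ j, f (p.succAbove j) := by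
  rw [← Fin.coe_succAboveEmb, ← prod_map univ p.succAboveEmb f]
  congr 1
  ext j
  simp [Fin.exists_succAbove_eq_iff]

lemma prod_Ioi_eq_prod_succAbove {M : Type*} [CommMonoid M] [HasDistribNeg M]
    (g : Fin (m + 1) → Fin (m + 1) → M) (hg : ∀ i j, g j i = -g i j) (p : Fin (m + 1)) :
    ∏ i, ∏ j ∈ Ioi i, g i j =
      (-1) ^ (p : ℕ) * (∏ j, g p (p.succAbove j)) *
        ∏ i, ∏ j ∈ Ioi i, g (p.succAbove i) (p.succAbove j) := by
  set h : Fin (m + 1) → Fin (m + 1) → M := fun i j => if i < j then g i j else 1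
  set s : Fin (m + 1) → M := fun i => if i < p then -1 else 1
  have hIoi {k : ℕ} (f : Fin k → Fin k → M) (i : Fin k) :
      ∏ j ∈ Ioi i, f i j = ∏ j, if i < j then f i j else 1 := by
    rw [← prod_filter, filter_lt_eq_Ioi]
  have hpair (j : Fin m) : h (p.succAbove j) p * h p (p.succAbove j) =
      s (p.succAbove j) * g p (p.succAbove j) := by
    rcases (p.succAbove_ne j).lt_or_gt with hj | hj
    · simp [h, s, hj, hj.not_gt, hg (p.succAbove j)]
    · simp [h, s, hj, hj.not_gt]
  have hsign : ∏ j, s (p.succAbove j) = (-1) ^ (p : ℕ) := by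
    have := Fin.prod_univ_succAbove s p
    rw [show s p = 1 by simp [s], one_mul] at this
    rw [← this, ← prod_filter, filter_gt_eq_Iio, prod_const, Fin.card_Iio]
  calc ∏ i, ∏ j ∈ Ioi i, g i j = ∏ i, ∏ j, h i j := by simp only [hIoi, h]
    _ = (∏ j, h p (p.succAbove j)) *
          ∏ i, (h (p.succAbove i) p * ∏ j, h (p.succAbove i) (p.succAbove j)) := by
      simp only [Fin.prod_univ_succAbove _ p, h, lt_irrefl, if_false, one_mul]
    _ = (∏ j, h (p.succAbove j) p * h p (p.succAbove j)) *
          ∏ i, ∏ j, h (p.succAbove i) (p.succAbove j) := by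
      rw [prod_mul_distrib, prod_mul_distrib, ← mul_assoc, mul_comm (∏ j, h p _)]
    _ = _ := by
      simp only [hpair, prod_mul_distrib, hsign, h, Fin.succAbove_lt_succAbove_iff,
        hIoi fun i j => g (p.succAbove i) (p.succAbove j)]

variable {F : Type*} [Field F]

lemma sum_eval_div_prod_sub_eq_zero [DecidableEq F] {s : Finset F} {P : F[X]}
    (hP : P.natDegree + 1 < #s) : ∑ z ∈ s, P.eval z / ∏ w ∈ s.erase z, (w - z) = 0 := by
  have hflip (z) (hz : z ∈ s) :
      ∏ w ∈ s.erase z, (w - z) = (-1) ^ (#s - 1) * ∏ w ∈ s.erase z, (z - w) := by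
    rw [← card_erase_of_mem hz, ← prod_neg]
    simp
  have hcoeff := Lagrange.coeff_eq_sum (v := id) (Set.injOn_id _)
    (P := P) ((degree_le_natDegree).trans_lt (by exact_mod_cast (by omega : P.natDegree < #s)))
  rw [coeff_eq_zero_of_natDegree_lt (by omega)] at hcoeff
  rw [sum_congr rfl fun z hz => by rw [hflip z hz, mul_comm, ← div_div], ← sum_div]
  simpa using hcoeff.symm

section Residues

variable {ι : Type*} [Fintype ι] [DecidableEq ι] {x : ι → F}

lemma sum_residues_eq_zero (hx : Function.Injective x) (hx0 : ∀ i, x i ≠ 0)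
    (hx1 : ∀ i, x i + 1 ≠ 0) {P : F[X]} (hP : P.natDegree ≤ Fintype.card ι) :
    P.eval 0 / -∏ j, x j + P.eval (-1) / ∏ j, (x j + 1) +
      ∑ k, P.eval (x k) / (x k * (x k + 1) * ∏ j ∈ univ.erase k, (x j - x k)) = 0 := by
  classical
  have hx1' (i : ι) : x i ≠ -1 := fun h => hx1 i (by rw [h]; ring)
  set T := univ.image x
  have h0T : (0 : F) ∉ insert (-1) T := by simp [T, hx0, eq_comm (a := (0 : F))]
  have h1T : (-1 : F) ∉ T := by simp [T, hx1']
  have hcard : #(insert 0 (insert (-1) T)) = Fintype.card ι + 2 := by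
    rw [card_insert_of_notMem h0T, card_insert_of_notMem h1T, card_image_of_injective _ hx,
      card_univ]
  have hvanish := sum_eval_div_prod_sub_eq_zero (P := P) (by rw [hcard]; omega)
  rw [sum_insert h0T, sum_insert h1T, sum_image hx.injOn, erase_insert h0T,
    erase_insert_of_ne (by norm_num), erase_insert h1T, ← add_assoc] at hvanish
  convert hvanish using 3 with k
  · rw [prod_insert h1T, prod_image hx.injOn]
    simp
  · rw [prod_insert (by simpa using h0T), prod_image hx.injOn]
    simp
  · rw [erase_insert_of_ne (hx0 k).symm, erase_insert_of_ne (hx1' k).symm, ← image_erase hx,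
      prod_insert (by simp [hx0]), prod_insert (by simp [hx1']), prod_image hx.injOn]
    ring

lemma sum_residues_eq_one_sub_prod (hx : Function.Injective x) (hx0 : ∀ i, x i ≠ 0)
    (hx1 : ∀ i, x i + 1 ≠ 0) :
    ∑ k, (1 - x k) * (∏ j ∈ univ.erase k, x j) *
        ∏ j ∈ univ.erase k, (1 - x j * x k) / (x j - x k) = 1 - ∏ j, x j := by
  set P : F[X] := ∏ j, (1 - C (x j) * X)
  have hP (z : F) : P.eval z = ∏ j, (1 - x j * z) := by simp [P, eval_prod]
  have hPdeg : P.natDegree ≤ Fintype.card ι := by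
    refine (natDegree_prod_le _ _).trans ((sum_le_card_nsmul _ _ 1 fun j _ => ?_).trans (by simp))
    exact (natDegree_sub_le _ _).trans
      (by simpa using (natDegree_C_mul_le (x j) X).trans natDegree_X_le)
  have hres0 : P.eval 0 / -∏ j, x j = -(∏ j, x j)⁻¹ := by simp [hP, div_neg]
  have hres1 : P.eval (-1) / ∏ j, (x j + 1) = 1 := by
    rw [hP, div_eq_one_iff_eq (prod_ne_zero_iff.2 fun j _ => hx1 j)]
    exact prod_congr rfl fun j _ => by ring
  have hsummand (k : ι) :
      (1 - x k) * (∏ j ∈ univ.erase k, x j) * ∏ j ∈ univ.erase k, (1 - x j * x k) / (x j - x k) =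
        (∏ j, x j) * (P.eval (x k) / (x k * (x k + 1) * ∏ j ∈ univ.erase k, (x j - x k))) := by
    have hne : ∏ j ∈ univ.erase k, (x j - x k) ≠ 0 :=
      prod_ne_zero_iff.2 fun j hj => sub_ne_zero.2 (hx.ne (ne_of_mem_erase hj))
    rw [hP, ← mul_prod_erase univ x (mem_univ k),
      ← mul_prod_erase univ (fun j => 1 - x j * x k) (mem_univ k), prod_div_distrib]
    field_simp [hx0 k, hx1 k, hne]
    ring
  have hres := sum_residues_eq_zero hx hx0 hx1 hPdeg
  rw [hres0, hres1] at hres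
  have hE : ∏ j, x j ≠ 0 := prod_ne_zero_iff.2 fun j _ => hx0 j
  rw [sum_congr rfl fun k _ => hsummand k, ← mul_sum,
    show ∑ k, _ = (∏ j, x j)⁻¹ - 1 by linear_combination hres]
  field_simp

end Residues

def asymSum {n : ℕ} (x : Fin n → F) : F :=
  ∑ σ : Equiv.Perm (Fin n), ((Equiv.Perm.sign σ : ℤ) : F) *
    ∏ i : Fin n, x (σ i) ^ (i : ℕ) * (1 - ∏ j ∈ Ici i, x (σ j))⁻¹

def closedForm {n : ℕ} (x : Fin n → F) : F :=
  (∏ i, (1 - x i)⁻¹) * ∏ i, ∏ j ∈ Ioi i, (x j - x i) / (1 - x i * x j)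

lemma asymSum_succ (x : Fin (m + 1) → F) :
    asymSum x = (1 - ∏ i, x i)⁻¹ *
      ∑ p : Fin (m + 1), (-1) ^ (p : ℕ) *
        ((∏ i, x (p.succAbove i)) * asymSum fun i => x (p.succAbove i)) := by
  rw [asymSum, sum_perm_fin_succ, mul_sum]
  refine sum_congr rfl fun p _ => ?_
  rw [asymSum, mul_sum, mul_sum, mul_sum]
  refine sum_congr rfl fun e _ => ?_
  have hIci (i : Fin m) : ∏ j ∈ Ici i.succ, x (permCons p e j) =
      ∏ j ∈ Ici i, x (p.succAbove (e j)) := by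
    simp [← Fin.map_succEmb_Ici, prod_map]
  have hfirst : ∏ j ∈ Ici (0 : Fin (m + 1)), x (permCons p e j) = ∏ i, x i := by
    rw [show Ici (0 : Fin (m + 1)) = univ from by ext; simp, Equiv.prod_comp]
  rw [Fin.prod_univ_succ, hfirst, sign_permCons]
  simp only [hIci, permCons_succ, Fin.val_succ, pow_succ, Fin.val_zero, pow_zero, one_mul]
  rw [← Equiv.prod_comp e (fun i => x (p.succAbove i))]
  simp only [prod_mul_distrib]
  push_cast
  ring

lemma closedForm_succAbove {x : Fin (m + 1) → F} (hx : Function.Injective x)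
    (hx1 : ∀ i j, 1 - x i * x j ≠ 0) (p : Fin (m + 1)) (hp : 1 - x p ≠ 0) :
    (-1) ^ (p : ℕ) * closedForm (fun i => x (p.succAbove i)) =
      closedForm x *
        ((1 - x p) * ∏ j, (1 - x (p.succAbove j) * x p) / (x (p.succAbove j) - x p)) := by
  set g : Fin (m + 1) → Fin (m + 1) → F := fun i j => (x j - x i) / (1 - x i * x j)
  have hg (i j) : g j i = -g i j := by simp only [g]; rw [mul_comm, ← neg_sub, neg_div]
  have hG : ∏ j, g p (p.succAbove j) ≠ 0 :=
    prod_ne_zero_iff.2 fun j _ => div_ne_zero (sub_ne_zero.2 (hx.ne (p.succAbove_ne j))) (hx1 _ _)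
  have hinv : ∏ j, (1 - x (p.succAbove j) * x p) / (x (p.succAbove j) - x p) =
      (∏ j, g p (p.succAbove j))⁻¹ := by
    simp only [g, ← prod_inv_distrib, inv_div, mul_comm (x p)]
  rw [hinv, closedForm, closedForm, Fin.prod_univ_succAbove (fun i => (1 - x i)⁻¹) p,
    prod_Ioi_eq_prod_succAbove g hg p]
  generalize ∏ i, ∏ j ∈ Ioi i, g (p.succAbove i) (p.succAbove j) = V
  field_simp

theorem asymSum_eq_closedForm {n : ℕ} {x : Fin n → F} (hx : Function.Injective x)
    (hx0 : ∀ i, x i ≠ 0) (hx1 : ∀ i j, 1 - x i * x j ≠ 0)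
    (hxs : ∀ s : Finset (Fin n), s.Nonempty → 1 - ∏ j ∈ s, x j ≠ 0) :
    asymSum x = closedForm x := by
  induction n with
  | zero => simp [asymSum, closedForm]
  | succ m ih =>
    have hsub (p : Fin (m + 1)) :
        asymSum (fun i => x (p.succAbove i)) = closedForm (fun i => x (p.succAbove i)) :=
      ih (hx.comp p.succAbove_right_injective) (fun _ => hx0 _) (fun _ _ => hx1 _ _)
        fun s hs => by simpa [prod_map] using hxs (s.map p.succAboveEmb) hs.map
    have hminus (i : Fin (m + 1)) : 1 - x i ≠ 0 := by simpa using hxs {i} (singleton_nonempty i)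
    have hplus (i : Fin (m + 1)) : x i + 1 ≠ 0 :=
      right_ne_zero_of_mul (a := 1 - x i) (by convert hx1 i i using 1; ring)
    have hterm (p : Fin (m + 1)) :
        (-1) ^ (p : ℕ) * ((∏ i, x (p.succAbove i)) * closedForm fun i => x (p.succAbove i)) =
          closedForm x * ((1 - x p) * (∏ j ∈ univ.erase p, x j) *
            ∏ j ∈ univ.erase p, (1 - x j * x p) / (x j - x p)) := by
      rw [mul_left_comm, closedForm_succAbove hx hx1 p (hminus p), prod_erase_eq_prod_succAbove,
        prod_erase_eq_prod_succAbove]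
      ring
    have hE : 1 - ∏ i, x i ≠ 0 := hxs univ univ_nonempty
    rw [asymSum_succ, sum_congr rfl fun p _ => by rw [hsub p, hterm p], ← mul_sum,
      sum_residues_eq_one_sub_prod hx hx0 hplus]
    field_simp

lemma one_sub_algebraMap_ne_zero {σ R : Type*} [CommRing R] [Nontrivial R]
    {q : MvPolynomial σ R} (hq : MvPolynomial.constantCoeff q = 0) :
    1 - algebraMap (MvPolynomial σ R) (FractionRing (MvPolynomial σ R)) q ≠ 0 := by
  rw [← map_one (algebraMap (MvPolynomial σ R) _), ← map_sub,
    map_ne_zero_iff _ (IsFractionRing.injective _ _)]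
  intro h
  simpa [hq] using congr(MvPolynomial.constantCoeff $h)

end Littlewood

theorem littlewood_antisymmetrization_general (n : ℕ) :
    letI K := FractionRing (MvPolynomial (Fin n) ℚ)
    letI Y : Fin n → K := fun i => algebraMap (MvPolynomial (Fin n) ℚ) K (MvPolynomial.X i)
    ∑ σ : Equiv.Perm (Fin n), ((Equiv.Perm.sign σ : ℤ) : K) *
        ∏ i : Fin n, (Y (σ i)) ^ (i : ℕ) * (1 - ∏ j ∈ Finset.Ici i, Y (σ j))⁻¹
      = (∏ i : Fin n, (1 - Y i)⁻¹) *
          ∏ i : Fin n, ∏ j ∈ Finset.Ioi i, (Y j - Y i) / (1 - Y i * Y j) := by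
  have hinj := IsFractionRing.injective (MvPolynomial (Fin n) ℚ)
    (FractionRing (MvPolynomial (Fin n) ℚ))
  refine Littlewood.asymSum_eq_closedForm
    (x := fun i => algebraMap _ (FractionRing _) (MvPolynomial.X i))
    (hinj.comp MvPolynomial.X_injective)
    (fun i => (map_ne_zero_iff _ hinj).2 (MvPolynomial.X_ne_zero i))
    (fun i j => ?_) (fun s hs => ?_)
  · rw [← map_mul]
    exact Littlewood.one_sub_algebraMap_ne_zero (by simp)
  · rw [← map_prod]
    exact Littlewood.one_sub_algebraMap_ne_zero (by simp [zero_pow (card_ne_zero.2 hs)])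

/-- **Littlewood identity, Zeilberger's Subsublemma 1.1.3.** In the field of
rational functions in `X_1,…,X_n` (`n ≥ 1`),
`ASym[ ∏_i X_i^{i-1} (1 - ∏_{j≥i} X_j)^{-1} ]
  = ∏_i (1 - X_i)^{-1} · ∏_{i<j} (X_j - X_i)/(1 - X_i X_j)`,
where `ASym f = Σ_{σ} sgn(σ) f(X_{σ(1)},…,X_{σ(n)})`. -/
theorem littlewood_antisymmetrization (n : ℕ) (hn : 1 ≤ n) :
    letI K := FractionRing (MvPolynomial (Fin n) ℚ)
    letI Y : Fin n → K := fun i => algebraMap (MvPolynomial (Fin n) ℚ) K (MvPolynomial.X i)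
    ∑ σ : Equiv.Perm (Fin n), ((Equiv.Perm.sign σ : ℤ) : K) *
        ∏ i : Fin n, (Y (σ i)) ^ (i : ℕ) * (1 - ∏ j ∈ Finset.Ici i, Y (σ j))⁻¹
      = (∏ i : Fin n, (1 - Y i)⁻¹) *
          ∏ i : Fin n, ∏ j ∈ Finset.Ioi i, (Y j - Y i) / (1 - Y i * Y j) :=
  littlewood_antisymmetrization_general n
end

section
/- For a skew-symmetric 2n×2n matrix A = (a_{i,j}), the Pfaffian Pf(A) = (1/(2^n n!)) Σ_{σ ∈ S_{2n}} sgn(σ) ∏_{i=1}^n a_{σ(2i-1),σ(2i)} satisfies Pf(A)^2 = det(A). -/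
/-- The Pfaffian of a `2n × 2n` matrix over a commutative ring containing `ℚ`:
`Pf(A) = (1/(2^n n!)) Σ_{σ ∈ S_{2n}} sgn(σ) ∏_{i=1}^n a_{σ(2i-1),σ(2i)}`. -/
noncomputable def pfaffian {R : Type*} [CommRing R] [Algebra ℚ R] {n : ℕ}
    (A : Matrix (Fin (2 * n)) (Fin (2 * n)) R) : R :=
  algebraMap ℚ R (1 / (2 ^ n * n.factorial)) *
    ∑ σ : Equiv.Perm (Fin (2 * n)), ((Equiv.Perm.sign σ : ℤ) : R) *
      ∏ i : Fin n, A (σ ⟨2 * (i : ℕ), by omega⟩) (σ ⟨2 * (i : ℕ) + 1, by omega⟩)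

/-!
Both sides transform in the same way under `A ↦ Bᵀ A B`: expanding the product exactly as in the
proof of `det_mul` shows that the Pfaffian picks up the factor `det B`, while the determinant picks
up `(det B)²`. Over a field of characteristic zero, a nonsingular skew-symmetric matrix is
`Bᵀ J B` for the standard symplectic matrix `J` (successive block elimination against `2 × 2`
pivots), and `J` has Pfaffian `1` and determinant `1`. Hence `Pf(A)² = det A` for nonsingular `A`
over such fields. The matrix `X` with entries `X_{uv} - X_{vu}` over `ℚ[X_{uv}]` is nonsingular,
as it specialises to `J`, so the identity holds for `X` in the fraction field, hence in `ℚ[X_{uv}]`,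
and every skew-symmetric matrix over a `ℚ`-algebra is a specialisation of `X`.
-/

open Matrix Equiv Finset
open scoped Kronecker

theorem Fintype.sum_fun_eq_sum_perm {ι M : Type*} [Fintype ι] [DecidableEq ι] [AddCommMonoid M]
    (g : (ι → ι) → M) (hg : ∀ f, ¬Function.Injective f → g f = 0) :
    ∑ f, g f = ∑ σ : Perm ι, g σ := by
  refine (Fintype.sum_of_injective _ DFunLike.coe_injective _ _
    (fun f hf => hg f fun hinj => hf ?_) fun _ => rfl).symm
  exact ⟨Equiv.ofBijective f (Finite.injective_iff_bijective.mp hinj), rfl⟩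

theorem Equiv.Perm.sign_prodShear {κ : Type*} [Fintype κ] [DecidableEq κ] (π : Perm κ)
    (ε : κ → Perm (Fin 2)) : Perm.sign (prodShear π ε) = ∏ k, Perm.sign (ε k) := by
  have : prodShear π ε = prodCongrLeft (fun _ => π) * prodCongrRight ε := by ext <;> rfl
  simp [this, Perm.sign_prodCongrLeft, Perm.sign_prodCongrRight, Int.units_sq]

theorem Equiv.prodShear_injective {κ ι : Type*} [Nonempty ι] :
    Function.Injective fun p : Perm κ × (κ → Perm ι) => (prodShear p.1 p.2 : Perm (κ × ι)) := by
  intro p q h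
  have h' := fun k a => congrArg (fun σ : Perm (κ × ι) => σ (k, a)) h
  simp only [prodShear_apply, Prod.mk.injEq] at h'
  exact Prod.ext (Equiv.ext fun k => (h' k (Classical.arbitrary ι)).1)
    (funext fun k => Equiv.ext fun a => (h' k a).2)

namespace Matrix

theorem transpose_submatrix_eq_neg {ι ι' R : Type*} [Ring R] {M : Matrix ι ι R} (hM : Mᵀ = -M)
    (e : ι' → ι) : (M.submatrix e e)ᵀ = -M.submatrix e e := by
  rw [transpose_submatrix, hM]
  rfl

section Expansion

variable {ι ι' κ R : Type*} [Fintype ι] [DecidableEq ι] [CommRing R]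

theorem det_submatrix_eq_sum (B : Matrix ι ι R) (f : ι → ι) :
    (B.submatrix f id).det = ∑ σ : Perm ι, (Perm.sign σ : R) * ∏ x, B (f x) (σ x) := by
  rw [← det_transpose, det_apply']
  rfl

/-- The combinatorial core of `det_mul`: only the permutations survive among all `f : ι → ι`. -/
theorem sum_sign_mul_sum_mul_prod (B : Matrix ι ι R) (c : (ι → ι) → R) :
    ∑ σ : Perm ι, (Perm.sign σ : R) * ∑ f : ι → ι, c f * ∏ x, B (f x) (σ x) =
      B.det * ∑ σ : Perm ι, (Perm.sign σ : R) * c σ := by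
  calc _ = ∑ f : ι → ι, c f * (B.submatrix f id).det := by
        simp only [det_submatrix_eq_sum, Finset.mul_sum]
        rw [Finset.sum_comm]
        exact sum_congr rfl fun _ _ => sum_congr rfl fun _ _ => by ring
    _ = ∑ σ : Perm ι, c σ * (B.submatrix σ id).det := by
        refine Fintype.sum_fun_eq_sum_perm _ fun f hf => ?_
        obtain ⟨x, y, hxy, hne⟩ : ∃ x y, f x = f y ∧ x ≠ y := by
          simpa [Function.Injective] using hf
        rw [det_zero_of_row_eq hne (by ext; simp [hxy]), mul_zero]
    _ = _ := by
        simp only [det_permute, Finset.mul_sum]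
        exact sum_congr rfl fun _ _ => by ring

omit [DecidableEq ι] in
theorem transpose_mul_mul_apply (M : Matrix ι ι R) (B : Matrix ι ι' R) (u v : ι') :
    (Bᵀ * M * B) u v = ∑ w : Fin 2 → ι, B (w 0) u * M (w 0) (w 1) * B (w 1) v := by
  rw [← (finTwoArrowEquiv ι).symm.sum_comp, Fintype.sum_prod_type]
  simp only [mul_apply, transpose_apply, Finset.sum_mul, finTwoArrowEquiv_symm_apply]
  rw [Finset.sum_comm]
  simp

omit [DecidableEq ι] in
theorem prod_transpose_mul_mul_apply [Fintype κ] [DecidableEq κ] (M : Matrix ι ι R)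
    (B : Matrix ι ι' R) (s : κ × Fin 2 → ι') :
    ∏ k, (Bᵀ * M * B) (s (k, 0)) (s (k, 1)) =
      ∑ f : κ × Fin 2 → ι, (∏ k, M (f (k, 0)) (f (k, 1))) * ∏ x, B (f x) (s x) := by
  simp only [transpose_mul_mul_apply, Finset.prod_univ_sum, Fintype.piFinset_univ]
  rw [← (Equiv.curry κ (Fin 2) ι).symm.sum_comp]
  refine sum_congr rfl fun f _ => ?_
  simp only [Fintype.prod_prod_type, Fin.prod_univ_two, Equiv.curry_symm_apply,
    Function.uncurry_apply_pair, ← Finset.prod_mul_distrib]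
  exact prod_congr rfl fun _ _ => by ring

end Expansion

section PfaffianSum

variable {κ R S : Type*} [Fintype κ] [DecidableEq κ] [CommRing R] [CommRing S]

/-- `2ⁿ n!` times the Pfaffian, for the pairing of `(k, 0)` with `(k, 1)`. -/
def pfaffianSum (M : Matrix (κ × Fin 2) (κ × Fin 2) R) : R :=
  ∑ σ : Perm (κ × Fin 2), (Perm.sign σ : R) * ∏ k, M (σ (k, 0)) (σ (k, 1))

theorem pfaffianSum_transpose_mul_mul (M B : Matrix (κ × Fin 2) (κ × Fin 2) R) :
    pfaffianSum (Bᵀ * M * B) = B.det * pfaffianSum M := by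
  simp only [pfaffianSum, prod_transpose_mul_mul_apply]
  exact sum_sign_mul_sum_mul_prod B _

theorem map_pfaffianSum {F : Type*} [FunLike F R S] [RingHomClass F R S] (f : F)
    (M : Matrix (κ × Fin 2) (κ × Fin 2) R) :
    f (pfaffianSum M) = pfaffianSum (M.map f) := by
  simp [pfaffianSum, map_sum, map_prod]

end PfaffianSum

section Darboux

variable (κ R : Type*) [DecidableEq κ] [CommRing R]

def darboux : Matrix (κ × Fin 2) (κ × Fin 2) R := (1 : Matrix κ κ R) ⊗ₖ !![0, 1; -1, 0]

variable {κ R}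

theorem darboux_apply (x y : κ × Fin 2) :
    darboux κ R x y = if x.1 = y.1 then !![0, 1; -1, 0] x.2 y.2 else 0 := by
  simp [darboux, one_apply, ite_mul]

theorem darboux_transpose : (darboux κ R)ᵀ = -darboux κ R := by
  ext ⟨k, a⟩ ⟨l, b⟩
  simp only [transpose_apply, neg_apply, darboux_apply, eq_comm (a := l)]
  split_ifs
  · fin_cases a <;> fin_cases b <;> simp
  · simp

theorem darboux_option_submatrix :
    (darboux (Option κ) R).submatrix optionProdEquiv.symm optionProdEquiv.symm =
      fromBlocks !![0, 1; -1, 0] 0 0 (darboux κ R) := by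
  ext (a | ⟨k, a⟩) (b | ⟨l, b⟩) <;> simp [darboux_apply]

theorem darboux_submatrix_prodCongr {κ' : Type*} [DecidableEq κ'] (e : κ ≃ κ') :
    (darboux κ' R).submatrix (e.prodCongr (.refl _)) (e.prodCongr (.refl _)) = darboux κ R := by
  ext ⟨k, a⟩ ⟨l, b⟩
  simp [darboux_apply]

theorem fin_two_symplectic_apply_perm (ε : Perm (Fin 2)) :
    (!![0, 1; -1, 0] : Matrix (Fin 2) (Fin 2) R) (ε 0) (ε 1) = Perm.sign ε := by
  obtain rfl | rfl : ε = 1 ∨ ε = Equiv.swap 0 1 := by revert ε; decide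
  all_goals simp

variable [Fintype κ]

theorem det_darboux : (darboux κ R).det = 1 := by
  simp [darboux, det_kronecker, det_fin_two]

theorem sign_mul_prod_darboux_prodShear (π : Perm κ) (ε : κ → Perm (Fin 2)) :
    (Perm.sign (prodShear π ε) : R) *
      ∏ k, darboux κ R (prodShear π ε (k, 0)) (prodShear π ε (k, 1)) = 1 := by
  simp only [Perm.sign_prodShear, prodShear_apply, darboux_apply, if_true,
    fin_two_symplectic_apply_perm]
  push_cast
  rw [← Finset.prod_mul_distrib]
  exact prod_eq_one fun k _ => by rw [← Int.cast_mul, ← Units.val_mul, Int.units_mul_self]; simp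

theorem exists_prodShear_of_prod_darboux_ne_zero (σ : Perm (κ × Fin 2))
    (hσ : ∏ k, darboux κ R (σ (k, 0)) (σ (k, 1)) ≠ 0) :
    ∃ p : Perm κ × (κ → Perm (Fin 2)), prodShear p.1 p.2 = σ := by
  have hfst : ∀ k a, (σ (k, a)).1 = (σ (k, 0)).1 := by
    intro k a
    have h : darboux κ R (σ (k, 0)) (σ (k, 1)) ≠ 0 := fun h => hσ (prod_eq_zero (mem_univ k) h)
    rw [darboux_apply] at h
    fin_cases a
    · rfl
    · exact (not_not.mp fun h' => h (if_neg h')).symm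
  have hσ_eq : ∀ k a, σ (k, a) = ((σ (k, 0)).1, (σ (k, a)).2) := fun k a =>
    Prod.ext (hfst k a) rfl
  let ε : κ → Perm (Fin 2) := fun k => Equiv.ofBijective (fun a => (σ (k, a)).2)
    (Finite.injective_iff_bijective.mp fun a b h =>
      congrArg Prod.snd (σ.injective ((hσ_eq k a).trans (by rw [h, ← hσ_eq]))))
  let π : Perm κ := Equiv.ofBijective (fun k => (σ (k, 0)).1)
    (Finite.injective_iff_bijective.mp fun k l h => by
      obtain ⟨b, hb⟩ := (ε k).surjective (σ (l, 0)).2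
      have : σ (l, 0) = σ (k, b) := by
        rw [hσ_eq l, hσ_eq k b, ← h]
        exact congrArg _ hb.symm
      simpa using (congrArg Prod.fst (σ.injective this)).symm)
  exact ⟨(π, ε), Equiv.ext fun x => (hσ_eq x.1 x.2).symm⟩

theorem pfaffianSum_darboux :
    pfaffianSum (darboux κ R) = 2 ^ Fintype.card κ * (Fintype.card κ).factorial := by
  rw [pfaffianSum, ← Fintype.sum_of_injective _ prodShear_injective
    (fun p => (Perm.sign (prodShear p.1 p.2) : R) *
      ∏ k, darboux κ R (prodShear p.1 p.2 (k, 0)) (prodShear p.1 p.2 (k, 1))) _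
    (fun σ hσ => ?_) fun _ => rfl]
  · simp only [sign_mul_prod_darboux_prodShear, sum_const, card_univ, Fintype.card_prod,
      Fintype.card_perm, Fintype.card_pi, prod_const, card_univ, Fintype.card_fin]
    ring
  · by_contra h
    exact hσ (exists_prodShear_of_prod_darboux_ne_zero σ (right_ne_zero_of_mul h))

end Darboux

section RepresentsForm

variable {ι ι' ι'' m n R : Type*} [CommRing R]

/-- `N.RepresentsForm M`: the bilinear form with Gram matrix `M` is obtained from the one with Gram
matrix `N` by a linear substitution, which need not be invertible. -/
def RepresentsForm [Fintype ι] (N : Matrix ι ι R) (M : Matrix ι' ι' R) : Prop :=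
  ∃ B : Matrix ι ι' R, Bᵀ * N * B = M

theorem RepresentsForm.refl [Fintype ι] [DecidableEq ι] (N : Matrix ι ι R) : N.RepresentsForm N :=
  ⟨1, by simp⟩

theorem RepresentsForm.trans [Fintype ι] [Fintype ι'] {N : Matrix ι ι R} {M : Matrix ι' ι' R}
    {P : Matrix ι'' ι'' R} (hNM : N.RepresentsForm M) (hMP : M.RepresentsForm P) :
    N.RepresentsForm P := by
  obtain ⟨B, rfl⟩ := hNM
  obtain ⟨C, rfl⟩ := hMP
  exact ⟨B * C, by simp only [transpose_mul, Matrix.mul_assoc]⟩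

theorem representsForm_submatrix [Fintype ι] [DecidableEq ι] [DecidableEq ι'] (N : Matrix ι ι R)
    (e : ι' ≃ ι) : N.RepresentsForm (N.submatrix e e) := by
  refine ⟨e.symm.toPEquiv.toMatrix, ?_⟩
  rw [← PEquiv.toMatrix_symm, ← Equiv.toPEquiv_symm, symm_symm, PEquiv.toMatrix_toPEquiv_mul,
    PEquiv.mul_toMatrix_toPEquiv, submatrix_submatrix, symm_symm]
  rfl

theorem submatrix_representsForm [Fintype ι] [Fintype ι'] [DecidableEq ι] [DecidableEq ι']
    (N : Matrix ι ι R) (e : ι' ≃ ι) : (N.submatrix e e).RepresentsForm N := by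
  simpa [submatrix_submatrix] using representsForm_submatrix (N.submatrix e e) e.symm

theorem RepresentsForm.fromBlocks_zero [Fintype m] [Fintype n] {N₁ : Matrix m m R}
    {N₂ : Matrix n n R} {M₁ : Matrix ι ι R} {M₂ : Matrix ι' ι' R} (h₁ : N₁.RepresentsForm M₁)
    (h₂ : N₂.RepresentsForm M₂) :
    (fromBlocks N₁ 0 0 N₂).RepresentsForm (fromBlocks M₁ 0 0 M₂) := by
  obtain ⟨B₁, rfl⟩ := h₁
  obtain ⟨B₂, rfl⟩ := h₂
  exact ⟨Matrix.fromBlocks B₁ 0 0 B₂, by simp [fromBlocks_transpose, fromBlocks_multiply]⟩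

theorem transpose_invOf_of_transpose_eq_neg [Fintype m] [DecidableEq m] (A : Matrix m m R)
    [Invertible A] (hA : Aᵀ = -A) : (⅟A)ᵀ = -⅟A := by
  have h : -(⅟A)ᵀ * A = 1 := by
    rw [Matrix.neg_mul, ← Matrix.mul_neg, ← hA, ← transpose_mul, mul_invOf_self, transpose_one]
  nth_rewrite 2 [invOf_eq_left_inv h]
  rw [neg_neg]

/-- The Schur factorization of a skew-symmetric matrix is a congruence: its lower unitriangular
factor is the transpose of the upper one. -/
theorem representsForm_fromBlocks_schur [Fintype m] [Fintype n] [DecidableEq m] [DecidableEq n]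
    (A : Matrix m m R) (B : Matrix m n R) (D : Matrix n n R) [Invertible A] (hA : Aᵀ = -A) :
    (fromBlocks A 0 0 (D + Bᵀ * ⅟A * B)).RepresentsForm (fromBlocks A B (-Bᵀ) D) := by
  refine ⟨fromBlocks 1 (⅟A * B) 0 1, ?_⟩
  conv_rhs => rw [fromBlocks_eq_of_invertible₁₁ (A := A)]
  simp only [fromBlocks_transpose, transpose_mul, transpose_invOf_of_transpose_eq_neg A hA,
    transpose_one, transpose_zero, Matrix.mul_neg, Matrix.neg_mul, sub_neg_eq_add,
    Matrix.mul_assoc]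

theorem representsForm_fin_two (a : R) :
    (!![0, 1; -1, 0] : Matrix (Fin 2) (Fin 2) R).RepresentsForm !![0, a; -a, 0] :=
  ⟨!![1, 0; 0, a], by ext i j; fin_cases i <;> fin_cases j <;> simp [mul_apply, Fin.sum_univ_two]⟩

end RepresentsForm

section Field

variable {ι n F : Type*} [Field F]

theorem exists_toBlocks₁₁_submatrix_eq [CharZero F] [Fintype ι] [DecidableEq ι]
    (M : Matrix ι ι F) (hM : Mᵀ = -M) (hdet : M.det ≠ 0) (e₀ : Fin 2 ⊕ n ≃ ι) :
    ∃ (e : Fin 2 ⊕ n ≃ ι) (a : F), a ≠ 0 ∧ toBlocks₁₁ (M.submatrix e e) = !![0, a; -a, 0] := by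
  have hskew : ∀ x y, M y x = -M x y := fun x y => congr($hM x y)
  have hdiag : ∀ x, M x x = 0 := fun x => self_eq_neg.mp (hskew x x)
  obtain ⟨j, hj⟩ : ∃ j, M (e₀ (.inl 0)) j ≠ 0 := by
    by_contra! h
    exact hdet (det_eq_zero_of_row_eq_zero _ h)
  have hj₀ : j ≠ e₀ (.inl 0) := by
    rintro rfl
    exact hj (hdiag _)
  have h₀ : Equiv.swap j (e₀ (.inl 1)) (e₀ (.inl 0)) = e₀ (.inl 0) :=
    swap_apply_of_ne_of_ne hj₀.symm (by simp)
  refine ⟨e₀.trans (Equiv.swap j (e₀ (.inl 1))), M (e₀ (.inl 0)) j, hj, ?_⟩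
  ext a b
  fin_cases a <;> fin_cases b <;> simp [toBlocks₁₁, h₀, hdiag, hskew _ j]

theorem exists_representsForm_of_toBlocks₁₁_eq [Fintype n] [DecidableEq n]
    (N : Matrix (Fin 2 ⊕ n) (Fin 2 ⊕ n) F) (hN : Nᵀ = -N) {a : F} (ha : a ≠ 0)
    (hA : toBlocks₁₁ N = !![0, a; -a, 0]) :
    ∃ S : Matrix n n F, Sᵀ = -S ∧ N.det = a ^ 2 * S.det ∧
      (fromBlocks !![0, 1; -1, 0] 0 0 S).RepresentsForm N := by
  set A : Matrix (Fin 2) (Fin 2) F := !![0, a; -a, 0]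
  have hAskew : Aᵀ = -A := by
    ext i j
    fin_cases i <;> fin_cases j <;> simp [A]
  have hAdet : A.det = a ^ 2 := by simp [A, det_fin_two_of, sq]
  have : Invertible A.det := invertibleOfNonzero (by rw [hAdet]; exact pow_ne_zero 2 ha)
  let _ : Invertible A := invertibleOfDetInvertible A
  set B := toBlocks₁₂ N
  set D := toBlocks₂₂ N
  have hN' : N = fromBlocks A B (-Bᵀ) D := by
    conv_lhs => rw [← fromBlocks_toBlocks N]
    rw [hA]
    congr 1
    ext i j
    exact congr($hN (.inl j) (.inr i))
  have hD : Dᵀ = -D := by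
    ext i j
    exact congr($hN (.inr i) (.inr j))
  refine ⟨D + Bᵀ * ⅟A * B, ?_, ?_, ?_⟩
  · simp only [transpose_add, transpose_mul, transpose_invOf_of_transpose_eq_neg A hAskew,
      transpose_transpose, hD, Matrix.mul_neg, Matrix.neg_mul, Matrix.mul_assoc, neg_add]
  · rw [hN', det_fromBlocks₁₁, hAdet, Matrix.neg_mul, Matrix.neg_mul, sub_neg_eq_add]
  · rw [hN']
    exact ((representsForm_fin_two a).fromBlocks_zero (.refl _)).trans
      (representsForm_fromBlocks_schur A B D hAskew)

theorem darboux_representsForm_option [CharZero F] {κ : Type*} [Fintype κ] [DecidableEq κ]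
    (ih : ∀ S : Matrix (κ × Fin 2) (κ × Fin 2) F, Sᵀ = -S → S.det ≠ 0 →
      (darboux κ F).RepresentsForm S)
    (M : Matrix (Option κ × Fin 2) (Option κ × Fin 2) F) (hM : Mᵀ = -M) (hdet : M.det ≠ 0) :
    (darboux (Option κ) F).RepresentsForm M := by
  obtain ⟨e, a, ha, hA⟩ := exists_toBlocks₁₁_submatrix_eq M hM hdet optionProdEquiv.symm
  obtain ⟨S, hS, hdetS, hSM⟩ := exists_representsForm_of_toBlocks₁₁_eq (M.submatrix e e)
    (transpose_submatrix_eq_neg hM e) ha hA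
  have hSdet : S.det ≠ 0 := fun h =>
    hdet (by rw [← det_submatrix_equiv_self e, hdetS, h, mul_zero])
  refine (representsForm_submatrix _ optionProdEquiv.symm).trans ?_
  rw [darboux_option_submatrix]
  exact (((RepresentsForm.refl _).fromBlocks_zero (ih S hS hSdet)).trans hSM).trans
    (submatrix_representsForm M e)

theorem darboux_representsForm [CharZero F] (κ : Type*) [Fintype κ] [DecidableEq κ]
    (M : Matrix (κ × Fin 2) (κ × Fin 2) F) (hM : Mᵀ = -M) (hdet : M.det ≠ 0) :
    (darboux κ F).RepresentsForm M := by
  revert M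
  refine Fintype.induction_empty_option (P := fun κ _ => ∀ [DecidableEq κ]
    (M : Matrix (κ × Fin 2) (κ × Fin 2) F), Mᵀ = -M → M.det ≠ 0 → (darboux κ F).RepresentsForm M)
    ?_ ?_ ?_ κ
  · intro α β _ e ih _ M hM hdet
    classical
    let _ : Fintype α := .ofEquiv β e.symm
    set f : α × Fin 2 ≃ β × Fin 2 := e.prodCongr (.refl _)
    have h := ih (M.submatrix f f) (transpose_submatrix_eq_neg hM f)
      (by rwa [det_submatrix_equiv_self])
    have hJ := representsForm_submatrix (darboux β F) f
    rw [darboux_submatrix_prodCongr] at hJ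
    exact (hJ.trans h).trans (submatrix_representsForm M f)
  · intro _ M _ _
    exact ⟨1, by ext ⟨⟨⟩, _⟩⟩
  · intro α _ ih hdec M hM hdet
    -- the motive allows any `DecidableEq (Option α)` instance; replace it by the canonical one
    let _ := Classical.decEq α
    obtain rfl : hdec = fun a b => a.instDecidableEq b := Subsingleton.elim _ _
    exact darboux_representsForm_option (fun S => ih S) M hM hdet

theorem pfaffianSum_sq_of_det_ne_zero [CharZero F] {κ : Type*} [Fintype κ] [DecidableEq κ]
    (M : Matrix (κ × Fin 2) (κ × Fin 2) F) (hM : Mᵀ = -M) (hdet : M.det ≠ 0) :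
    pfaffianSum M ^ 2 = (2 ^ Fintype.card κ * (Fintype.card κ).factorial) ^ 2 * M.det := by
  obtain ⟨B, rfl⟩ := darboux_representsForm κ M hM hdet
  rw [pfaffianSum_transpose_mul_mul, pfaffianSum_darboux, det_mul, det_mul, det_transpose,
    det_darboux]
  ring

end Field

section Generic

variable (ι : Type*)

/-- Differences of indeterminates avoid choosing an order on `ι`; `genericSkew_map_aeval`
specialises `X (u, v)` to `A u v / 2`. -/
noncomputable def genericSkew : Matrix ι ι (MvPolynomial (ι × ι) ℚ) :=
  of fun u v => .X (u, v) - .X (v, u)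

variable {ι} {κ : Type*} [Fintype κ] [DecidableEq κ]

theorem genericSkew_transpose : (genericSkew ι)ᵀ = -genericSkew ι := by
  ext u v
  simp [genericSkew]

theorem genericSkew_map_aeval {R : Type*} [CommRing R] [Algebra ℚ R] (A : Matrix ι ι R)
    (hA : Aᵀ = -A) :
    (genericSkew ι).map (MvPolynomial.aeval fun x => (2⁻¹ : ℚ) • A x.1 x.2) = A := by
  ext u v
  have h : A v u = -A u v := congr($hA u v)
  simp only [genericSkew, map_apply, of_apply, map_sub, MvPolynomial.aeval_X, h]
  module

theorem det_genericSkew_ne_zero :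
    (genericSkew (κ × Fin 2)).det ≠ 0 := by
  intro h
  have := congrArg (MvPolynomial.aeval fun x => (2⁻¹ : ℚ) • darboux κ ℚ x.1 x.2) h
  rw [AlgHom.map_det, AlgHom.mapMatrix_apply, genericSkew_map_aeval _ darboux_transpose,
    det_darboux, map_zero] at this
  exact one_ne_zero this

theorem pfaffianSum_genericSkew_sq :
    pfaffianSum (genericSkew (κ × Fin 2)) ^ 2 =
      (2 ^ Fintype.card κ * (Fintype.card κ).factorial) ^ 2 * (genericSkew (κ × Fin 2)).det := by
  let φ := algebraMap (MvPolynomial ((κ × Fin 2) × (κ × Fin 2)) ℚ)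
    (FractionRing (MvPolynomial ((κ × Fin 2) × (κ × Fin 2)) ℚ))
  have hφ : Function.Injective φ := IsFractionRing.injective _ _
  apply hφ
  have hskew : ((genericSkew (κ × Fin 2)).map φ)ᵀ = -(genericSkew (κ × Fin 2)).map φ := by
    rw [← transpose_map, genericSkew_transpose, Matrix.map_neg _ (map_neg φ)]
  have hdet : ((genericSkew (κ × Fin 2)).map φ).det ≠ 0 := by
    rw [← RingHom.mapMatrix_apply, ← RingHom.map_det, map_ne_zero_iff _ hφ]
    exact det_genericSkew_ne_zero
  simpa [map_pfaffianSum, RingHom.map_det, map_ofNat] using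
    pfaffianSum_sq_of_det_ne_zero _ hskew hdet

theorem pfaffianSum_sq {R : Type*} [CommRing R] [Algebra ℚ R]
    (A : Matrix (κ × Fin 2) (κ × Fin 2) R) (hA : Aᵀ = -A) :
    pfaffianSum A ^ 2 = (2 ^ Fintype.card κ * (Fintype.card κ).factorial) ^ 2 * A.det := by
  simpa [map_pfaffianSum, AlgHom.map_det, genericSkew_map_aeval A hA] using
    congrArg (MvPolynomial.aeval fun x => (2⁻¹ : ℚ) • A x.1 x.2) pfaffianSum_genericSkew_sq

end Generic

end Matrix

def finPairEquiv (n : ℕ) : Fin n × Fin 2 ≃ Fin (2 * n) :=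
  finProdFinEquiv.trans (finCongr (Nat.mul_comm n 2))

theorem finPairEquiv_apply {n : ℕ} (i : Fin n) (a : Fin 2) :
    (finPairEquiv n (i, a) : ℕ) = 2 * i + a := by
  simp [finPairEquiv, add_comm]

theorem pfaffian_eq_pfaffianSum {R : Type*} [CommRing R] [Algebra ℚ R] {n : ℕ}
    (A : Matrix (Fin (2 * n)) (Fin (2 * n)) R) :
    pfaffian A = algebraMap ℚ R (1 / (2 ^ n * n.factorial)) *
      (A.submatrix (finPairEquiv n) (finPairEquiv n)).pfaffianSum := by
  have h₀ (i : Fin n) : (⟨2 * i, by omega⟩ : Fin (2 * n)) = finPairEquiv n (i, 0) :=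
    Fin.ext (by simp [finPairEquiv_apply])
  have h₁ (i : Fin n) : (⟨2 * i + 1, by omega⟩ : Fin (2 * n)) = finPairEquiv n (i, 1) :=
    Fin.ext (by simp [finPairEquiv_apply])
  rw [pfaffian, pfaffianSum]
  congr 1
  refine (Fintype.sum_equiv (finPairEquiv n).permCongr _ _ fun σ => ?_).symm
  simp [h₀, h₁, Perm.sign_permCongr, permCongr_apply]

/-- For a skew-symmetric `2n × 2n` matrix `A`, `Pf(A)² = det A`. -/
theorem pfaffian_sq_eq_det {R : Type*} [CommRing R] [Algebra ℚ R] {n : ℕ}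
    (A : Matrix (Fin (2 * n)) (Fin (2 * n)) R) (hA : A.transpose = -A) :
    pfaffian A ^ 2 = A.det := by
  have hc : algebraMap ℚ R (1 / (2 ^ n * n.factorial)) * (2 ^ n * n.factorial) = 1 := by
    rw [← map_ofNat (algebraMap ℚ R), ← map_natCast (algebraMap ℚ R), ← map_pow, ← map_mul,
      ← map_mul, one_div_mul_cancel (by positivity), map_one]
  rw [pfaffian_eq_pfaffianSum, mul_pow, pfaffianSum_sq _ (transpose_submatrix_eq_neg hA _), det_submatrix_equiv_self,
    Fintype.card_fin, ← mul_assoc, ← mul_pow, hc, one_pow, one_mul]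
end
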